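/- arXiv:2212.07747 — 2 statements merged into one kernel-verified Lean document; each statement's English description precedes it below -/
import Mathlib

section
/- Fix integers K, L ≥ 1 and ρ > 0. Let x : [0,∞) → ℝ^{K×L} be differentiable solving dx_{ij}/dt = ρ(x_{i·}(t) x_{·j}(t) − x_{ij}(t)) for all t ≥ 0 and all i,j, where x_{i·}(t) = ∑_{j=1}^L x_{ij}(t) and x_{·j}(t) = ∑_{i=1}^K x_{ij}(t), with x_{ij}(0) > 0 for all i,j and ∑_{i,j} x_{ij}(0) = 1. Define I_T = ∫_0^T ∑_{i,j} (x_{ij}(t) − x_{i·}(t)x_{·j}(t))^2 / x_{ij}(t) dt. Then as T → ∞, I_T converges to the finite limit ρ^{-1} ∑_{i=1}^K ∑_{j=1}^L x_{i·}(0) x_{·j}(0) log( x_{i·}(0) x_{·j}(0) / x_{ij}(0) ). -/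
/-!
The marginals are conserved: the total mass `S` solves `S' = ρ S (S - 1)` with `S(0) = 1`, so
`S ≡ 1` by Grönwall, and then the derivatives of the row and column sums vanish. Each coordinate
therefore relaxes linearly, `x' = ρ (m - x)` with `m = x_{i·}(0) x_{·j}(0)`, so it stays positive and
tends to `m`, and `ρ⁻¹ (m log x - x)` is an antiderivative of `(x - m)² / x`. The limit is this
potential at `∞` minus its value at `0`; the linear terms cancel since `∑ x(0) = ∑ m = 1`.
-/

open Filter Topology Set Real

theorem eq_zero_of_hasDerivAt_eq_smul_self {E : Type*} [NormedAddCommGroup E] [NormedSpace ℝ E]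
    {u : ℝ → E} {a : ℝ → ℝ} (ha : ContinuousOn a (Ici 0))
    (hu : ∀ t, 0 ≤ t → HasDerivAt u (a t • u t) t) (hu0 : u 0 = 0) (t : ℝ) (ht : 0 ≤ t) :
    u t = 0 := by
  obtain ⟨C, hC⟩ := isCompact_Icc.exists_bound_of_continuousOn
    (ha.mono (Icc_subset_Ici_self : Icc 0 t ⊆ Ici 0))
  refine eq_zero_of_abs_deriv_le_mul_abs_self_of_eq_zero_right (K := C)
    (fun s hs => (hu s hs.1).continuousAt.continuousWithinAt)
    (fun s hs => (hu s hs.1).hasDerivWithinAt) hu0 (fun s hs => ?_) t ⟨ht, le_rfl⟩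
  rw [norm_smul]
  exact mul_le_mul_of_nonneg_right (hC s (Ico_subset_Icc_self hs)) (norm_nonneg _)

theorem eq_of_hasDerivAt_zero {E : Type*} [NormedAddCommGroup E] [NormedSpace ℝ E]
    {f : ℝ → E} (hf : ∀ t, 0 ≤ t → HasDerivAt f 0 t) (t : ℝ) (ht : 0 ≤ t) : f t = f 0 :=
  sub_eq_zero.mp <| eq_zero_of_hasDerivAt_eq_smul_self (u := fun s => f s - f 0) (a := 0)
    continuousOn_const (fun s hs => by simpa using (hf s hs).sub_const (f 0)) (sub_self _) t ht

section Relaxation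

variable {ρ m : ℝ} {y : ℝ → ℝ}

theorem eq_add_mul_exp_of_hasDerivAt_relax (hy : ∀ t, 0 ≤ t → HasDerivAt y (ρ * (m - y t)) t)
    (t : ℝ) (ht : 0 ≤ t) : y t = m + (y 0 - m) * exp (-(ρ * t)) := by
  have hexp (s : ℝ) : HasDerivAt (fun s => exp (-(ρ * s))) (exp (-(ρ * s)) * -ρ) s := by
    simpa using ((hasDerivAt_id s).const_mul ρ).neg.exp
  refine sub_eq_zero.mp <| eq_zero_of_hasDerivAt_eq_smul_self
    (u := fun s => y s - (m + (y 0 - m) * exp (-(ρ * s)))) (a := fun _ => -ρ)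
    continuousOn_const (fun s hs => ?_) (by simp) t ht
  refine ((hy s hs).sub (((hexp s).const_mul (y 0 - m)).const_add m)).congr_deriv ?_
  simp only [smul_eq_mul]
  ring

theorem pos_of_hasDerivAt_relax (hρ : 0 ≤ ρ) (hm : 0 < m) (hy0 : 0 < y 0)
    (hy : ∀ t, 0 ≤ t → HasDerivAt y (ρ * (m - y t)) t) (t : ℝ) (ht : 0 ≤ t) : 0 < y t := by
  rw [eq_add_mul_exp_of_hasDerivAt_relax hy t ht]
  have h₀ : 0 < exp (-(ρ * t)) := exp_pos _
  have h₁ : exp (-(ρ * t)) ≤ 1 := exp_le_one_iff.2 (by nlinarith)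
  nlinarith

theorem tendsto_of_hasDerivAt_relax (hρ : 0 < ρ)
    (hy : ∀ t, 0 ≤ t → HasDerivAt y (ρ * (m - y t)) t) : Tendsto y atTop (𝓝 m) := by
  have hexp : Tendsto (fun t => exp (-(ρ * t))) atTop (𝓝 0) :=
    tendsto_exp_neg_atTop_nhds_zero.comp (tendsto_id.const_mul_atTop hρ)
  have hlim := (hexp.const_mul (y 0 - m)).const_add m
  rw [mul_zero, add_zero] at hlim
  refine hlim.congr' ?_
  filter_upwards [eventually_ge_atTop 0] with t ht
  exact (eq_add_mul_exp_of_hasDerivAt_relax hy t ht).symm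

theorem hasDerivAt_relax_potential {t : ℝ} (hρ : ρ ≠ 0) (hy : HasDerivAt y (ρ * (m - y t)) t)
    (hyt : y t ≠ 0) :
    HasDerivAt (fun s => ρ⁻¹ * (m * log (y s) - y s)) ((y t - m) ^ 2 / y t) t := by
  refine ((((hy.log hyt).const_mul m).sub hy).const_mul ρ⁻¹).congr_deriv ?_
  field_simp
  ring

end Relaxation

theorem tendsto_integral_sum_sq_sub_div_of_hasDerivAt_relax {ι : Type*} [Fintype ι] {ρ : ℝ}
    (hρ : 0 < ρ) {m : ι → ℝ} {y : ι → ℝ → ℝ} (hm : ∀ k, 0 < m k) (hy0 : ∀ k, 0 < y k 0)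
    (hy : ∀ k t, 0 ≤ t → HasDerivAt (y k) (ρ * (m k - y k t)) t) :
    Tendsto (fun T => ∫ t in (0 : ℝ)..T, ∑ k, (y k t - m k) ^ 2 / y k t) atTop
      (𝓝 (ρ⁻¹ * ∑ k, (m k * log (m k / y k 0) + y k 0 - m k))) := by
  let G : ℝ → ℝ := fun s => ∑ k, ρ⁻¹ * (m k * log (y k s) - y k s)
  have hpos k t (ht : 0 ≤ t) : 0 < y k t := pos_of_hasDerivAt_relax hρ.le (hm k) (hy0 k) (hy k) t ht
  have hG_deriv t (ht : 0 ≤ t) : HasDerivAt G (∑ k, (y k t - m k) ^ 2 / y k t) t :=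
    HasDerivAt.fun_sum fun k _ => hasDerivAt_relax_potential hρ.ne' (hy k t ht) (hpos k t ht).ne'
  have hcont : ContinuousOn (fun t => ∑ k, (y k t - m k) ^ 2 / y k t) (Ici 0) := by
    refine continuousOn_finsetSum _ fun k _ => ?_
    have hyk : ContinuousOn (y k) (Ici 0) := fun t ht => (hy k t ht).continuousAt.continuousWithinAt
    exact ((hyk.sub continuousOn_const).pow 2).div hyk fun t ht => (hpos k t ht).ne'
  have hG_lim : Tendsto G atTop (𝓝 (∑ k, ρ⁻¹ * (m k * log (m k) - m k))) := by
    refine tendsto_finsetSum _ fun k _ => ?_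
    have hyk := tendsto_of_hasDerivAt_relax hρ (hy k)
    exact (((hyk.log (hm k).ne').const_mul (m k)).sub hyk).const_mul ρ⁻¹
  have hvalue : ∑ k, ρ⁻¹ * (m k * log (m k) - m k) - G 0 =
      ρ⁻¹ * ∑ k, (m k * log (m k / y k 0) + y k 0 - m k) := by
    simp only [G, Finset.mul_sum, ← Finset.sum_sub_distrib]
    refine Finset.sum_congr rfl fun k _ => ?_
    rw [log_div (hm k).ne' (hy0 k).ne']
    ring
  rw [← hvalue]
  refine (hG_lim.sub_const (G 0)).congr' ?_
  filter_upwards [eventually_ge_atTop 0] with T hT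
  rw [intervalIntegral.integral_eq_sub_of_hasDerivAt]
  · intro t ht
    rw [uIcc_of_le hT] at ht
    exact hG_deriv t ht.1
  · rw [intervalIntegrable_iff_integrableOn_Icc_of_le hT]
    exact (hcont.mono Icc_subset_Ici_self).integrableOn_Icc

theorem sum_sum_rowSum_mul_colSum {ι κ R : Type*} [Fintype ι] [Fintype κ] [CommSemiring R]
    (y : ι → κ → R) :
    ∑ i, ∑ j, (∑ j', y i j') * (∑ i', y i' j) = (∑ i, ∑ j, y i j) ^ 2 := by
  rw [← Finset.sum_mul_sum, sq, Finset.sum_comm (f := fun i j => y j i)]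

def IsRecombinationSolution {ι κ : Type*} [Fintype ι] [Fintype κ] (ρ : ℝ)
    (x : ℝ → ι → κ → ℝ) : Prop :=
  ∀ t, 0 ≤ t → ∀ i j, HasDerivAt (fun s => x s i j)
    (ρ * ((∑ j', x t i j') * (∑ i', x t i' j) - x t i j)) t

namespace IsRecombinationSolution

variable {ι κ : Type*} [Fintype ι] [Fintype κ] {ρ : ℝ} {x : ℝ → ι → κ → ℝ}

theorem hasDerivAt_sum (h : IsRecombinationSolution ρ x) (t : ℝ) (ht : 0 ≤ t) :
    HasDerivAt (fun s => ∑ i, ∑ j, x s i j)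
      (ρ * ((∑ i, ∑ j, x t i j) ^ 2 - ∑ i, ∑ j, x t i j)) t := by
  refine (HasDerivAt.fun_sum fun i _ => HasDerivAt.fun_sum fun j _ => h t ht i j).congr_deriv ?_
  simp only [← sum_sum_rowSum_mul_colSum, ← Finset.sum_sub_distrib, Finset.mul_sum]

theorem hasDerivAt_rowSum (h : IsRecombinationSolution ρ x) (t : ℝ) (ht : 0 ≤ t) (i : ι) :
    HasDerivAt (fun s => ∑ j, x s i j)
      ((ρ * ∑ j, x t i j) * ((∑ i, ∑ j, x t i j) - 1)) t := by
  refine (HasDerivAt.fun_sum fun j _ => h t ht i j).congr_deriv ?_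
  simp only [← Finset.mul_sum, Finset.sum_sub_distrib]
  rw [Finset.sum_comm (f := fun j i => x t i j)]
  ring

theorem hasDerivAt_colSum (h : IsRecombinationSolution ρ x) (t : ℝ) (ht : 0 ≤ t) (j : κ) :
    HasDerivAt (fun s => ∑ i, x s i j)
      ((ρ * ∑ i, x t i j) * ((∑ i, ∑ j, x t i j) - 1)) t := by
  refine (HasDerivAt.fun_sum fun i _ => h t ht i j).congr_deriv ?_
  simp only [← Finset.mul_sum, ← Finset.sum_mul, Finset.sum_sub_distrib]
  ring

theorem sum_eq_one (h : IsRecombinationSolution ρ x) (h0 : ∑ i, ∑ j, x 0 i j = 1)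
    (t : ℝ) (ht : 0 ≤ t) : ∑ i, ∑ j, x t i j = 1 := by
  refine sub_eq_zero.mp <| eq_zero_of_hasDerivAt_eq_smul_self
    (u := fun s => ∑ i, ∑ j, x s i j - 1) (a := fun s => ρ * ∑ i, ∑ j, x s i j)
    (fun s hs => ?_) (fun s hs => ((h.hasDerivAt_sum s hs).sub_const 1).congr_deriv (by
      simp only [smul_eq_mul]; ring)) (by simp [h0]) t ht
  exact (continuousAt_const.mul (h.hasDerivAt_sum s hs).continuousAt).continuousWithinAt

theorem rowSum_eq (h : IsRecombinationSolution ρ x) (h0 : ∑ i, ∑ j, x 0 i j = 1)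
    (t : ℝ) (ht : 0 ≤ t) (i : ι) : ∑ j, x t i j = ∑ j, x 0 i j :=
  eq_of_hasDerivAt_zero (fun s hs => by
    simpa [h.sum_eq_one h0 s hs] using h.hasDerivAt_rowSum s hs i) t ht

theorem colSum_eq (h : IsRecombinationSolution ρ x) (h0 : ∑ i, ∑ j, x 0 i j = 1)
    (t : ℝ) (ht : 0 ≤ t) (j : κ) : ∑ i, x t i j = ∑ i, x 0 i j :=
  eq_of_hasDerivAt_zero (fun s hs => by
    simpa [h.sum_eq_one h0 s hs] using h.hasDerivAt_colSum s hs j) t ht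

theorem hasDerivAt_relax (h : IsRecombinationSolution ρ x) (h0 : ∑ i, ∑ j, x 0 i j = 1)
    (t : ℝ) (ht : 0 ≤ t) (i : ι) (j : κ) :
    HasDerivAt (fun s => x s i j) (ρ * ((∑ j', x 0 i j') * (∑ i', x 0 i' j) - x t i j)) t := by
  rw [← h.rowSum_eq h0 t ht i, ← h.colSum_eq h0 t ht j]
  exact h t ht i j

end IsRecombinationSolution

theorem deterministic_information_limit_general (K L : ℕ)
    (ρ : ℝ) (hρ : 0 < ρ)
    (x : ℝ → Fin K → Fin L → ℝ)
    (hode : ∀ t, 0 ≤ t → ∀ i j, HasDerivAt (fun s => x s i j)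
      (ρ * ((∑ j', x t i j') * (∑ i', x t i' j) - x t i j)) t)
    (hx0 : ∀ i j, 0 < x 0 i j) (hsum0 : ∑ i, ∑ j, x 0 i j = 1) :
    Tendsto (fun T : ℝ => ∫ t in (0 : ℝ)..T,
        ∑ i, ∑ j, (x t i j - (∑ j', x t i j') * (∑ i', x t i' j)) ^ 2 / x t i j)
      atTop
      (nhds (ρ⁻¹ * ∑ i, ∑ j, (∑ j', x 0 i j') * (∑ i', x 0 i' j) *
        Real.log ((∑ j', x 0 i j') * (∑ i', x 0 i' j) / x 0 i j))) := by
  have hsol : IsRecombinationSolution ρ x := hode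
  have hm (k : Fin K × Fin L) : 0 < (∑ j', x 0 k.1 j') * (∑ i', x 0 i' k.2) :=
    mul_pos (Finset.sum_pos (fun j _ => hx0 k.1 j) ⟨k.2, Finset.mem_univ _⟩)
      (Finset.sum_pos (fun i _ => hx0 i k.2) ⟨k.1, Finset.mem_univ _⟩)
  have hlim := tendsto_integral_sum_sq_sub_div_of_hasDerivAt_relax hρ hm (fun k => hx0 k.1 k.2)
    (fun k t ht => hsol.hasDerivAt_relax hsum0 t ht k.1 k.2)
  have hvalue : ∑ k : Fin K × Fin L, ((∑ j', x 0 k.1 j') * (∑ i', x 0 i' k.2) *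
      log ((∑ j', x 0 k.1 j') * (∑ i', x 0 i' k.2) / x 0 k.1 k.2) + x 0 k.1 k.2
        - (∑ j', x 0 k.1 j') * (∑ i', x 0 i' k.2)) =
      ∑ i, ∑ j, (∑ j', x 0 i j') * (∑ i', x 0 i' j) *
        log ((∑ j', x 0 i j') * (∑ i', x 0 i' j) / x 0 i j) := by
    simp only [Fintype.sum_prod_type, Finset.sum_sub_distrib, Finset.sum_add_distrib,
      sum_sum_rowSum_mul_colSum, hsum0]
    ring
  rw [hvalue] at hlim
  refine hlim.congr' ?_
  filter_upwards [eventually_ge_atTop 0] with T hT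
  refine intervalIntegral.integral_congr fun t ht => ?_
  rw [uIcc_of_le hT] at ht
  simp only [Fintype.sum_prod_type, hsol.rowSum_eq hsum0 t ht.1, hsol.colSum_eq hsum0 t ht.1]

/-- Along a differentiable solution of the deterministic recombination
equation with `ρ > 0` and strictly positive initial frequencies summing to 1, the accumulated
information `I_T` converges, as `T → ∞`, to the finite limit
`ρ⁻¹ ∑_{i,j} x_{i·}(0) x_{·j}(0) log(x_{i·}(0) x_{·j}(0) / x_{ij}(0))`. -/
theorem deterministic_information_limit (K L : ℕ) (hK : 1 ≤ K) (hL : 1 ≤ L)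
    (ρ : ℝ) (hρ : 0 < ρ)
    (x : ℝ → Fin K → Fin L → ℝ)
    (hode : ∀ t, 0 ≤ t → ∀ i j, HasDerivAt (fun s => x s i j)
      (ρ * ((∑ j', x t i j') * (∑ i', x t i' j) - x t i j)) t)
    (hx0 : ∀ i j, 0 < x 0 i j) (hsum0 : ∑ i, ∑ j, x 0 i j = 1) :
    Tendsto (fun T : ℝ => ∫ t in (0 : ℝ)..T,
        ∑ i, ∑ j, (x t i j - (∑ j', x t i j') * (∑ i', x t i' j)) ^ 2 / x t i j)
      atTop
      (nhds (ρ⁻¹ * ∑ i, ∑ j, (∑ j', x 0 i j') * (∑ i', x 0 i' j) *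
        Real.log ((∑ j', x 0 i j') * (∑ i', x 0 i' j) / x 0 i j))) :=
  deterministic_information_limit_general K L ρ hρ x hode hx0 hsum0
end

section
/- Fix integers K, L ≥ 1, ρ ∈ ℝ, θ_A, θ_B ∈ ℝ with θ := θ_A + θ_B, and probability vectors P^A ∈ ℝ^K and P^B ∈ ℝ^L. Let x : [0,∞) → ℝ^{K×L} be differentiable with x(0) having nonnegative entries summing to 1, solving dx_{ij}/dt = ρ(x_{i·}x_{·j} − x_{ij}) + (θ_A/2)(x_{·j} P^A_i − x_{ij}) + (θ_B/2)(x_{i·} P^B_j − x_{ij}) for all t ≥ 0 and all i,j, where x_{i·} = ∑_{j} x_{ij} and x_{·j} = ∑_{i} x_{ij}. Then for all t ≥ 0 and all i,j: x_{ij}(t) = (1 − e^{−(ρ+θ/2)t}) P^A_i P^B_j + (x_{·j}(0) − P^B_j) P^A_i (e^{−(θ_B/2)t} − e^{−(ρ+θ/2)t}) + (x_{i·}(0) − P^A_i) P^B_j (e^{−(θ_A/2)t} − e^{−(ρ+θ/2)t}) + (x_{i·}(0) − P^A_i)(x_{·j}(0) − P^B_j)(e^{−(θ/2)t} − e^{−(ρ+θ/2)t})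 + x_{ij}(0) e^{−(ρ+θ/2)t}. -/
/-!
Summing the equation over both loci, the total mass `S` solves `S' = ρ S (S - 1)`, so `S ≡ 1`
by Grönwall. Given this, each marginal obeys a linear relaxation equation,
`x_{i·}' = (θ_A/2)(P^A_i - x_{i·})` and `x_{·j}' = (θ_B/2)(P^B_j - x_{·j})`, while the linkage
disequilibrium `D_{ij} = x_{ij} - x_{i·} x_{·j}` decays as `D' = -(ρ + θ/2) D`. Hence
`x_{ij}(t) = x_{i·}(t) x_{·j}(t) + D_{ij}(0) e^{-(ρ+θ/2)t}`, which expands to the stated formula.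
-/

open Finset

theorem eq_zero_of_hasDerivAt_mul_self {f a : ℝ → ℝ} (ha : ContinuousOn a (Set.Ici 0))
    (hf : ∀ t, 0 ≤ t → HasDerivAt f (a t * f t) t) (h0 : f 0 = 0) :
    ∀ t, 0 ≤ t → f t = 0 := by
  intro T hT
  obtain ⟨C, hC⟩ := (isCompact_Icc (a := 0) (b := T)).exists_bound_of_continuousOn
    (ha.mono Set.Icc_subset_Ici_self)
  refine eq_zero_of_abs_deriv_le_mul_abs_self_of_eq_zero_right (K := C)
    (fun t ht => (hf t ht.1).continuousAt.continuousWithinAt)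
    (fun t ht => (hf t ht.1).hasDerivWithinAt) h0 (fun t ht => ?_) T ⟨hT, le_rfl⟩
  rw [norm_mul]
  exact mul_le_mul_of_nonneg_right (hC t (Set.Ico_subset_Icc_self ht)) (norm_nonneg _)

theorem eq_mul_exp_of_hasDerivAt {f : ℝ → ℝ} {k : ℝ}
    (hf : ∀ t, 0 ≤ t → HasDerivAt f (k * f t) t) :
    ∀ t, 0 ≤ t → f t = f 0 * Real.exp (k * t) := by
  have hexp (t : ℝ) :
      HasDerivAt (fun s => f 0 * Real.exp (k * s)) (k * (f 0 * Real.exp (k * t))) t := by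
    have := ((hasDerivAt_id t).const_mul k).exp.const_mul (f 0)
    simp only [id, mul_one] at this
    exact this.congr_deriv (by ring)
  intro t ht
  have h := eq_zero_of_hasDerivAt_mul_self (f := fun s => f s - f 0 * Real.exp (k * s))
    continuousOn_const (fun s hs => ((hf s hs).sub (hexp s)).congr_deriv (by ring)) (by simp) t ht
  exact sub_eq_zero.1 h

theorem eq_add_mul_exp_of_hasDerivAt {f : ℝ → ℝ} {c p : ℝ}
    (hf : ∀ t, 0 ≤ t → HasDerivAt f (c * (p - f t)) t) :
    ∀ t, 0 ≤ t → f t = p + (f 0 - p) * Real.exp (-c * t) := by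
  intro t ht
  have := eq_mul_exp_of_hasDerivAt (f := fun s => f s - p) (k := -c)
    (fun s hs => ((hf s hs).sub_const p).congr_deriv (by ring)) t ht
  linarith

namespace MutationRecombination

variable {K L : ℕ} (ρ θA θB : ℝ) (PA : Fin K → ℝ) (PB : Fin L → ℝ)

noncomputable def drift (y : Fin K → Fin L → ℝ) (i : Fin K) (j : Fin L) : ℝ :=
  ρ * ((∑ j', y i j') * (∑ i', y i' j) - y i j)
    + θA / 2 * ((∑ i', y i' j) * PA i - y i j)
    + θB / 2 * ((∑ j', y i j') * PB j - y i j)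

def IsSolution (x : ℝ → Fin K → Fin L → ℝ) : Prop :=
  ∀ t, 0 ≤ t → ∀ i j, HasDerivAt (fun s => x s i j) (drift ρ θA θB PA PB (x t) i j) t

def linkageDisequilibrium (y : Fin K → Fin L → ℝ) (i : Fin K) (j : Fin L) : ℝ :=
  y i j - (∑ j', y i j') * (∑ i', y i' j)

variable {ρ θA θB PA PB}

theorem sum_drift_row (hPB : ∑ j, PB j = 1) (y : Fin K → Fin L → ℝ) (i : Fin K) :
    ∑ j, drift ρ θA θB PA PB y i j
      = ρ * (∑ j, y i j) * (∑ i', ∑ j, y i' j - 1)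
        + θA / 2 * ((∑ i', ∑ j, y i' j) * PA i - ∑ j, y i j) := by
  simp only [drift, sum_add_distrib, sum_sub_distrib, ← mul_sum, ← sum_mul, hPB,
    sum_comm (γ := Fin L) (f := fun j i' => y i' j)]
  ring

theorem sum_drift_col (hPA : ∑ i, PA i = 1) (y : Fin K → Fin L → ℝ) (j : Fin L) :
    ∑ i, drift ρ θA θB PA PB y i j
      = ρ * (∑ i, y i j) * (∑ i, ∑ j', y i j' - 1)
        + θB / 2 * ((∑ i, ∑ j', y i j') * PB j - ∑ i, y i j) := by
  simp only [drift, sum_add_distrib, sum_sub_distrib, ← mul_sum, ← sum_mul, hPA]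
  ring

theorem sum_sum_drift (hPA : ∑ i, PA i = 1) (hPB : ∑ j, PB j = 1) (y : Fin K → Fin L → ℝ) :
    ∑ i, ∑ j, drift ρ θA θB PA PB y i j
      = ρ * (∑ i, ∑ j, y i j) * (∑ i, ∑ j, y i j - 1) := by
  simp only [sum_drift_row hPB, sum_add_distrib, sum_sub_distrib, ← mul_sum, ← sum_mul, hPA]
  ring

namespace IsSolution

variable {x : ℝ → Fin K → Fin L → ℝ}

theorem sum_sum_eq_one (hx : IsSolution ρ θA θB PA PB x) (hPA : ∑ i, PA i = 1)
    (hPB : ∑ j, PB j = 1) (hsum0 : ∑ i, ∑ j, x 0 i j = 1) {t : ℝ} (ht : 0 ≤ t) :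
    ∑ i, ∑ j, x t i j = 1 := by
  have hderiv (s : ℝ) (hs : 0 ≤ s) : HasDerivAt (fun s => ∑ i, ∑ j, x s i j)
      (ρ * (∑ i, ∑ j, x s i j) * (∑ i, ∑ j, x s i j - 1)) s := by
    rw [← sum_sum_drift hPA hPB]
    exact HasDerivAt.fun_sum fun i _ => HasDerivAt.fun_sum fun j _ => hx s hs i j
  have hcont : ContinuousOn (fun s => ρ * ∑ i, ∑ j, x s i j) (Set.Ici 0) := fun s hs =>
    (hderiv s hs).continuousAt.continuousWithinAt.const_mul ρ
  have h := eq_zero_of_hasDerivAt_mul_self hcont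
    (fun s hs => ((hderiv s hs).sub_const 1).congr_deriv (by ring)) (by simp [hsum0]) t ht
  exact sub_eq_zero.1 h

theorem hasDerivAt_sum_row (hx : IsSolution ρ θA θB PA PB x) (hPA : ∑ i, PA i = 1)
    (hPB : ∑ j, PB j = 1) (hsum0 : ∑ i, ∑ j, x 0 i j = 1) (i : Fin K) {t : ℝ} (ht : 0 ≤ t) :
    HasDerivAt (fun s => ∑ j, x s i j) (θA / 2 * (PA i - ∑ j, x t i j)) t := by
  have h := HasDerivAt.fun_sum fun j (_ : j ∈ univ) => hx t ht i j
  rwa [sum_drift_row hPB, hx.sum_sum_eq_one hPA hPB hsum0 ht, sub_self, mul_zero, zero_add,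
    one_mul] at h

theorem hasDerivAt_sum_col (hx : IsSolution ρ θA θB PA PB x) (hPA : ∑ i, PA i = 1)
    (hPB : ∑ j, PB j = 1) (hsum0 : ∑ i, ∑ j, x 0 i j = 1) (j : Fin L) {t : ℝ} (ht : 0 ≤ t) :
    HasDerivAt (fun s => ∑ i, x s i j) (θB / 2 * (PB j - ∑ i, x t i j)) t := by
  have h := HasDerivAt.fun_sum fun i (_ : i ∈ univ) => hx t ht i j
  rwa [sum_drift_col hPA, hx.sum_sum_eq_one hPA hPB hsum0 ht, sub_self, mul_zero, zero_add,
    one_mul] at h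

theorem sum_row_eq (hx : IsSolution ρ θA θB PA PB x) (hPA : ∑ i, PA i = 1)
    (hPB : ∑ j, PB j = 1) (hsum0 : ∑ i, ∑ j, x 0 i j = 1) (i : Fin K) {t : ℝ} (ht : 0 ≤ t) :
    ∑ j, x t i j = PA i + (∑ j, x 0 i j - PA i) * Real.exp (-(θA / 2) * t) :=
  eq_add_mul_exp_of_hasDerivAt (fun _ hs => hx.hasDerivAt_sum_row hPA hPB hsum0 i hs) t ht

theorem sum_col_eq (hx : IsSolution ρ θA θB PA PB x) (hPA : ∑ i, PA i = 1)
    (hPB : ∑ j, PB j = 1) (hsum0 : ∑ i, ∑ j, x 0 i j = 1) (j : Fin L) {t : ℝ} (ht : 0 ≤ t) :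
    ∑ i, x t i j = PB j + (∑ i, x 0 i j - PB j) * Real.exp (-(θB / 2) * t) :=
  eq_add_mul_exp_of_hasDerivAt (fun _ hs => hx.hasDerivAt_sum_col hPA hPB hsum0 j hs) t ht

theorem linkageDisequilibrium_eq (hx : IsSolution ρ θA θB PA PB x) (hPA : ∑ i, PA i = 1)
    (hPB : ∑ j, PB j = 1) (hsum0 : ∑ i, ∑ j, x 0 i j = 1) (i : Fin K) (j : Fin L) {t : ℝ}
    (ht : 0 ≤ t) :
    linkageDisequilibrium (x t) i j
      = linkageDisequilibrium (x 0) i j * Real.exp (-(ρ + (θA + θB) / 2) * t) := by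
  refine eq_mul_exp_of_hasDerivAt (f := fun s => linkageDisequilibrium (x s) i j)
    (fun s hs => ?_) t ht
  have hrow := hx.hasDerivAt_sum_row hPA hPB hsum0 i hs
  have hcol := hx.hasDerivAt_sum_col hPA hPB hsum0 j hs
  exact ((hx s hs i j).sub (hrow.mul hcol)).congr_deriv
    (by simp only [drift, linkageDisequilibrium]; ring)

end IsSolution

end MutationRecombination

open MutationRecombination in
theorem mutation_recombination_solution_general (K L : ℕ)
    (ρ θA θB : ℝ)
    (PA : Fin K → ℝ) (hPAsum : ∑ i, PA i = 1)
    (PB : Fin L → ℝ) (hPBsum : ∑ j, PB j = 1)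
    (x : ℝ → Fin K → Fin L → ℝ)
    (hsum0 : ∑ i, ∑ j, x 0 i j = 1)
    (hode : ∀ t, 0 ≤ t → ∀ i j, HasDerivAt (fun s => x s i j)
      (ρ * ((∑ j', x t i j') * (∑ i', x t i' j) - x t i j)
        + θA / 2 * ((∑ i', x t i' j) * PA i - x t i j)
        + θB / 2 * ((∑ j', x t i j') * PB j - x t i j)) t) :
    ∀ t, 0 ≤ t → ∀ i j,
      x t i j =
        (1 - Real.exp (-(ρ + (θA + θB) / 2) * t)) * (PA i * PB j)
        + ((∑ i', x 0 i' j) - PB j) * PA i *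
            (Real.exp (-(θB / 2) * t) - Real.exp (-(ρ + (θA + θB) / 2) * t))
        + ((∑ j', x 0 i j') - PA i) * PB j *
            (Real.exp (-(θA / 2) * t) - Real.exp (-(ρ + (θA + θB) / 2) * t))
        + ((∑ j', x 0 i j') - PA i) * ((∑ i', x 0 i' j) - PB j) *
            (Real.exp (-((θA + θB) / 2) * t) - Real.exp (-(ρ + (θA + θB) / 2) * t))
        + x 0 i j * Real.exp (-(ρ + (θA + θB) / 2) * t) := by
  intro t ht i j
  have hx : IsSolution ρ θA θB PA PB x := hode
  have hD := hx.linkageDisequilibrium_eq hPAsum hPBsum hsum0 i j ht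
  simp only [linkageDisequilibrium] at hD
  rw [hx.sum_row_eq hPAsum hPBsum hsum0 i ht, hx.sum_col_eq hPAsum hPBsum hsum0 j ht] at hD
  have hexp : Real.exp (-((θA + θB) / 2) * t)
      = Real.exp (-(θA / 2) * t) * Real.exp (-(θB / 2) * t) := by
    rw [← Real.exp_add]; ring_nf
  rw [hexp]
  linear_combination hD

/-- Explicit solution of the deterministic mutation–recombination equation.
With `θ = θ_A + θ_B`, any differentiable solution started from nonnegative frequencies
summing to 1 satisfies, for all `t ≥ 0`,
`x_{ij}(t) = (1 − e^{−(ρ+θ/2)t}) P^A_i P^B_j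
  + (x_{·j}(0) − P^B_j) P^A_i (e^{−(θ_B/2)t} − e^{−(ρ+θ/2)t})
  + (x_{i·}(0) − P^A_i) P^B_j (e^{−(θ_A/2)t} − e^{−(ρ+θ/2)t})
  + (x_{i·}(0) − P^A_i)(x_{·j}(0) − P^B_j)(e^{−(θ/2)t} − e^{−(ρ+θ/2)t})
  + x_{ij}(0) e^{−(ρ+θ/2)t}`. -/
theorem mutation_recombination_solution (K L : ℕ) (hK : 1 ≤ K) (hL : 1 ≤ L)
    (ρ θA θB : ℝ)
    (PA : Fin K → ℝ) (hPA : ∀ i, 0 ≤ PA i) (hPAsum : ∑ i, PA i = 1)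
    (PB : Fin L → ℝ) (hPB : ∀ j, 0 ≤ PB j) (hPBsum : ∑ j, PB j = 1)
    (x : ℝ → Fin K → Fin L → ℝ)
    (hx0 : ∀ i j, 0 ≤ x 0 i j) (hsum0 : ∑ i, ∑ j, x 0 i j = 1)
    (hode : ∀ t, 0 ≤ t → ∀ i j, HasDerivAt (fun s => x s i j)
      (ρ * ((∑ j', x t i j') * (∑ i', x t i' j) - x t i j)
        + θA / 2 * ((∑ i', x t i' j) * PA i - x t i j)
        + θB / 2 * ((∑ j', x t i j') * PB j - x t i j)) t) :
    ∀ t, 0 ≤ t → ∀ i j,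
      x t i j =
        (1 - Real.exp (-(ρ + (θA + θB) / 2) * t)) * (PA i * PB j)
        + ((∑ i', x 0 i' j) - PB j) * PA i *
            (Real.exp (-(θB / 2) * t) - Real.exp (-(ρ + (θA + θB) / 2) * t))
        + ((∑ j', x 0 i j') - PA i) * PB j *
            (Real.exp (-(θA / 2) * t) - Real.exp (-(ρ + (θA + θB) / 2) * t))
        + ((∑ j', x 0 i j') - PA i) * ((∑ i', x 0 i' j) - PB j) *
            (Real.exp (-((θA + θB) / 2) * t) - Real.exp (-(ρ + (θA + θB) / 2) * t))
        + x 0 i j * Real.exp (-(ρ + (θA + θB) / 2) * t) :=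
  mutation_recombination_solution_general K L ρ θA θB PA hPAsum PB hPBsum x hsum0 hode
end
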